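/- Let D be an n×n Hermitian complex matrix with all eigenvalues of absolute value ≥ λ > 0, let p be an idempotent Hermitian matrix, and suppose ‖[D,p]‖ < λ. Then for every u ∈ [0,1], the matrix D_u = D + u(2p-1)[D,p] is invertible. -/

import Mathlib

open scoped Matrix.Norms.L2Operator

/-! Since `p` is a Hermitian idempotent, `2p - 1` is unitary, so the perturbation
`u (2p - 1) [D, p]` has norm at most `‖[D, p]‖ < λ`. Expanding in an orthonormal eigenbasis of `D`,
the spectral gap gives `λ ‖x‖ ≤ ‖D x‖`, hence `(λ - ‖[D, p]‖) ‖x‖ ≤ ‖D_u x‖`: the matrix `D_u` is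
injective, so invertible. -/

theorem OrthonormalBasis.mul_norm_le_norm_apply_of_apply_eq_smul
    {ι 𝕜 E : Type*} [Fintype ι] [RCLike 𝕜] [NormedAddCommGroup E] [InnerProductSpace 𝕜 E]
    (b : OrthonormalBasis ι 𝕜 E) {T : E →L[𝕜] E} {μ : ι → 𝕜} (hT : ∀ i, T (b i) = μ i • b i)
    {lam : ℝ} (hlam : 0 ≤ lam) (hμ : ∀ i, lam ≤ ‖μ i‖) (x : E) :
    lam * ‖x‖ ≤ ‖T x‖ := by
  have hrepr : ∀ i, b.repr (T x) i = μ i * b.repr x i := by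
    classical
    intro i
    conv_lhs => rw [← b.sum_repr x]
    simp [hT, b.repr_self, Pi.single_apply, mul_comm]
  have hnorm : ∀ y, ‖y‖ ^ 2 = ∑ i, ‖b.repr y i‖ ^ 2 := fun y => by
    rw [← b.repr.norm_map y, EuclideanSpace.norm_sq_eq]
  refine (pow_le_pow_iff_left₀ (by positivity) (norm_nonneg _) two_ne_zero).1 ?_
  rw [mul_pow, hnorm, hnorm, Finset.mul_sum]
  gcongr with i
  rw [hrepr, norm_mul, mul_pow]
  gcongr
  exact hμ i

theorem Matrix.IsHermitian.mul_norm_le_norm_toEuclideanCLM {𝕜 n : Type*} [RCLike 𝕜] [Fintype n]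
    [DecidableEq n] {A : Matrix n n 𝕜} (hA : A.IsHermitian) {lam : ℝ} (hlam : 0 ≤ lam)
    (hgap : ∀ i, lam ≤ |hA.eigenvalues i|) (x : EuclideanSpace 𝕜 n) :
    lam * ‖x‖ ≤ ‖toEuclideanCLM (𝕜 := 𝕜) A x‖ := by
  refine hA.eigenvectorBasis.mul_norm_le_norm_apply_of_apply_eq_smul (μ := fun i ↦ hA.eigenvalues i)
    (fun i ↦ ?_) hlam (fun i ↦ by simpa using hgap i) x
  ext j
  rw [ofLp_toEuclideanCLM, hA.mulVec_eigenvectorBasis]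
  simp

theorem ContinuousLinearMap.sub_opNorm_mul_norm_le_norm_add_apply {𝕜 E F : Type*}
    [NontriviallyNormedField 𝕜] [SeminormedAddCommGroup E] [SeminormedAddCommGroup F]
    [NormedSpace 𝕜 E] [NormedSpace 𝕜 F] {f g : E →L[𝕜] F} {c : ℝ}
    (hf : ∀ x, c * ‖x‖ ≤ ‖f x‖) (x : E) : (c - ‖g‖) * ‖x‖ ≤ ‖(f + g) x‖ :=
  calc (c - ‖g‖) * ‖x‖ = c * ‖x‖ - ‖g‖ * ‖x‖ := sub_mul ..
    _ ≤ ‖f x‖ - ‖g x‖ := sub_le_sub (hf x) (g.le_opNorm x)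
    _ ≤ ‖(f + g) x‖ := by simpa using norm_sub_le_norm_add (f x) (g x)

theorem Matrix.isUnit_of_mul_norm_le_norm_toEuclideanCLM {𝕜 n : Type*} [RCLike 𝕜] [Fintype n]
    [DecidableEq n] {A : Matrix n n 𝕜} {c : ℝ} (hc : 0 < c)
    (hA : ∀ x, c * ‖x‖ ≤ ‖toEuclideanCLM (𝕜 := 𝕜) A x‖) : IsUnit A := by
  have hinj : Function.Injective (toEuclideanCLM (𝕜 := 𝕜) A) :=
    ((toEuclideanCLM (𝕜 := 𝕜) A).antilipschitz_of_bound (K := ⟨c⁻¹, by positivity⟩) fun x ↦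
      (le_inv_mul_iff₀ hc).2 (hA x)).injective
  rw [← mulVec_injective_iff_isUnit]
  intro x y hxy
  simpa using @hinj (WithLp.toLp 2 x) (WithLp.toLp 2 y) (by simp [toEuclideanCLM_toLp, hxy])

theorem path_invertible_general (n : ℕ) (D p : Matrix (Fin n) (Fin n) ℂ)
    (hD : D.IsHermitian) (hp : p * p = p) (hpH : p.IsHermitian)
    (lam : ℝ)
    (hgap : ∀ i, lam ≤ |hD.eigenvalues i|)
    (hcomm : ‖D * p - p * D‖ < lam) :
    ∀ u : ℝ, u ∈ Set.Icc (0 : ℝ) 1 →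
      IsUnit (D + u • ((2 • p - 1) * (D * p - p * D))) := by
  rintro u ⟨hu0, hu1⟩
  have hrefl : 2 • p - 1 ∈ unitary (Matrix (Fin n) (Fin n) ℂ) := by
    simpa [two_nsmul, two_mul] using IsStarProjection.two_mul_sub_one_mem_unitary ⟨hp, hpH⟩
  have hpert : ‖u • ((2 • p - 1) * (D * p - p * D))‖ < lam :=
    calc ‖u • ((2 • p - 1) * (D * p - p * D))‖ = u * ‖D * p - p * D‖ := by
          rw [norm_smul, Real.norm_of_nonneg hu0, CStarRing.norm_mem_unitary_mul _ hrefl]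
      _ ≤ ‖D * p - p * D‖ := mul_le_of_le_one_left (norm_nonneg _) hu1
      _ < lam := hcomm
  have hlower := hD.mul_norm_le_norm_toEuclideanCLM ((norm_nonneg _).trans hcomm.le) hgap
  refine Matrix.isUnit_of_mul_norm_le_norm_toEuclideanCLM (sub_pos.2 hpert) fun x ↦ ?_
  rw [map_add, ← Matrix.l2_opNorm_toEuclideanCLM]
  exact ContinuousLinearMap.sub_opNorm_mul_norm_le_norm_add_apply hlower x

/-- Invertibility along the path (Lemma 3.2): if the Hermitian matrix `D` has
all eigenvalues of absolute value `≥ λ > 0`, `p` is a Hermitian idempotent,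
and `‖[D,p]‖ < λ`, then `D_u = D + u(2p-1)[D,p]` is invertible for `u ∈ [0,1]`. -/
theorem path_invertible (n : ℕ) (D p : Matrix (Fin n) (Fin n) ℂ)
    (hD : D.IsHermitian) (hp : p * p = p) (hpH : p.IsHermitian)
    (lam : ℝ) (hlam : 0 < lam)
    (hgap : ∀ i, lam ≤ |hD.eigenvalues i|)
    (hcomm : ‖D * p - p * D‖ < lam) :
    ∀ u : ℝ, u ∈ Set.Icc (0 : ℝ) 1 →
      IsUnit (D + u • ((2 • p - 1) * (D * p - p * D))) :=
  path_invertible_general n D p hD hp hpH lam hgap hcomm
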